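/- arXiv:2408.16922 — 4 statements merged into one kernel-verified Lean document; each statement's English description precedes it below -/
import Mathlib

section
/- Let (W,S) be a Coxeter system with S finite and let B_W be its Artin braid group with generators β_s. For any element w of W, if w = s₁⋯sₙ and w = t₁⋯tₙ are two reduced expressions of w, then β_{s₁}⋯β_{sₙ} = β_{t₁}⋯β_{tₙ} in B_W (so the lift β_w is well defined). -/
open CoxeterSystem

/-- The set of braid relations in the free group on `B`. -/
def braidRelsSet {B : Type*} (M : CoxeterMatrix B) : Set (FreeGroup B) :=
  ⋃ (i : B) (j : B),
    {((braidWord M i j).map FreeGroup.of).prod * (((braidWord M j i).map FreeGroup.of).prod)⁻¹}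

/-- The Artin braid group of the Coxeter matrix `M`. -/
abbrev BraidGroup {B : Type*} (M : CoxeterMatrix B) : Type _ :=
  PresentedGroup (braidRelsSet M)

/-- The generator `β_i` of the braid group. -/
def braidGen {B : Type*} (M : CoxeterMatrix B) (i : B) : BraidGroup M :=
  PresentedGroup.of i

/-!
Matsumoto's theorem, by induction on the length. Two reduced words for `w` with the same last
letter are handled by the induction hypothesis. If the last letters `i ≠ j` differ, both are
right descents of `w`, and repeated use of the exchange condition produces reduced words for `w`
ending in the two alternating words of length `M i j`; these differ by one braid relation and are
joined to the given words by induction. The exchange condition comes from Tits' parity action of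
`W` on `W × ZMod 2`. That `M i j` is finite here, and that the exchanged letter never falls inside
the alternating suffix, rest on `s i * s j` having order exactly `M i j`, which is read off from
the geometric representation: there `σ_i σ_j` acts on the span of `e_i, e_j` as a rotation by
`2π / M i j`.
-/

theorem prod_map_braidGen_braidWord {B : Type*} (M : CoxeterMatrix B) (i j : B) :
    ((braidWord M i j).map (braidGen M)).prod = ((braidWord M j i).map (braidGen M)).prod := by
  have hmk (ω : List B) :
      (ω.map (braidGen M)).prod = PresentedGroup.mk _ (ω.map FreeGroup.of).prod := by
    rw [map_list_prod, List.map_map]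
    rfl
  rw [hmk, hmk]
  exact PresentedGroup.mk_eq_mk_of_mul_inv_mem (Set.mem_iUnion₂.mpr ⟨i, j, rfl⟩)

theorem List.count_eq_two_mul_count_take {α : Type*} [BEq α] {l : List α} {n : ℕ}
    (h : l.drop n = l.take n) (a : α) : l.count a = 2 * (l.take n).count a := by
  calc l.count a = (l.take n ++ l.drop n).count a := by rw [List.take_append_drop]
    _ = 2 * (l.take n).count a := by rw [h, List.count_append, two_mul]

namespace CoxeterSystem

open List

variable {B : Type*} {W : Type*} [Group W] {M : CoxeterMatrix B} (cs : CoxeterSystem M W)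

local prefix:100 "s " => cs.simple
local prefix:100 "π " => cs.wordProd
local prefix:100 "ℓ " => cs.length
local prefix:100 "lis " => cs.leftInvSeq

theorem prod_map_alternatingWord_two_mul {G : Type*} [Monoid G] (f : B → G) (i j : B) (n : ℕ) :
    ((alternatingWord i j (2 * n)).map f).prod = (f i * f j) ^ n := by
  induction n with
  | zero => simp [alternatingWord]
  | succ n ih =>
    rw [show 2 * (n + 1) = 2 * n + 1 + 1 by ring, alternatingWord_succ, alternatingWord_succ]
    simp [ih, pow_succ]

theorem wordProd_alternatingWord_add_two_mul (i j : B) (n : ℕ) :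
    π (alternatingWord i j (n + 2 * M i j)) = π (alternatingWord i j n) := by
  simp only [prod_alternatingWord_eq_mul_pow, Nat.even_add, even_two_mul, iff_true,
    show (n + 2 * M i j) / 2 = n / 2 + M i j by omega, pow_add, simple_mul_simple_pow, mul_one]

section Parity

variable [DecidableEq W]

/-- Tits' action of words on `W × ZMod 2`. -/
def parityAction (ω : List B) : Function.End (W × ZMod 2) :=
  fun p => (π ω * p.1 * (π ω)⁻¹, p.2 + (lis ω).count (π ω * p.1 * (π ω)⁻¹))

theorem parityAction_nil : cs.parityAction [] = 1 := by
  funext p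
  simp [parityAction, Function.End.one_def]

theorem parityAction_cons (i : B) (ω : List B) :
    cs.parityAction (i :: ω) = cs.parityAction [i] * cs.parityAction ω := by
  funext ⟨t, ε⟩
  have hconj := List.count_map_of_injective (lis ω) (MulAut.conj (s i)) (MulAut.conj _).injective
    (π ω * t * (π ω)⁻¹)
  show _ = cs.parityAction [i] (cs.parityAction ω (t, ε))
  simp only [parityAction, wordProd_cons, wordProd_nil, leftInvSeq, List.count_cons,
    List.map_nil, List.count_nil, MulAut.conj_apply, mul_inv_rev, mul_one,
    ← mul_assoc] at hconj ⊢
  rw [hconj, zero_add, Nat.cast_add, add_assoc]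

theorem prod_map_parityAction_singleton (ω : List B) :
    (ω.map fun i => cs.parityAction [i]).prod = cs.parityAction ω := by
  induction ω with
  | nil => exact cs.parityAction_nil.symm
  | cons i ω ih => rw [List.map_cons, List.prod_cons, ih, ← parityAction_cons]

theorem parityAction_alternatingWord_two_mul (i j : B) :
    cs.parityAction (alternatingWord i j (2 * M i j)) = 1 := by
  set L := lis (alternatingWord i j (2 * M i j))
  have hπ : π (alternatingWord i j (2 * M i j)) = 1 := by
    simpa [alternatingWord] using cs.wordProd_alternatingWord_add_two_mul i j 0
  have hperiodic : L.drop (M i j) = L.take (M i j) := by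
    apply List.ext_getElem (by simp [L]; omega)
    intro k h₁ h₂
    simp only [List.getElem_drop, List.getElem_take, L]
    simp only [List.length_drop, length_leftInvSeq, length_alternatingWord, L] at h₁
    rw [cs.getElem_leftInvSeq_alternatingWord i j _ _ (by omega),
      cs.getElem_leftInvSeq_alternatingWord i j _ _ (by omega),
      show 2 * (M i j + k) + 1 = 2 * k + 1 + 2 * M j i by rw [M.symmetric]; ring]
    exact cs.wordProd_alternatingWord_add_two_mul j i _
  funext ⟨t, ε⟩
  have hcount : (L.count t : ZMod 2) = 0 := by
    rw [List.count_eq_two_mul_count_take hperiodic, Nat.cast_mul]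
    exact mul_eq_zero_of_left rfl _
  simp [parityAction, hπ, hcount, L, Function.End.one_def]

theorem isLiftable_parityAction_singleton : M.IsLiftable fun i => cs.parityAction [i] := by
  intro i j
  rw [← prod_map_alternatingWord_two_mul (fun i => cs.parityAction [i]),
    prod_map_parityAction_singleton, parityAction_alternatingWord_two_mul]

theorem parityAction_eq_of_wordProd_eq {ω₁ ω₂ : List B} (h : π ω₁ = π ω₂) :
    cs.parityAction ω₁ = cs.parityAction ω₂ := by
  have hlift (ω : List B) :
      cs.lift ⟨_, cs.isLiftable_parityAction_singleton⟩ (π ω) = cs.parityAction ω := by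
    rw [wordProd, map_list_prod, List.map_map, ← prod_map_parityAction_singleton]
    exact congrArg _ (List.map_congr_left fun i _ => lift_apply_simple _ _ i)
  rw [← hlift, ← hlift, h]

theorem count_leftInvSeq_eq_of_wordProd_eq {ω₁ ω₂ : List B} (h : π ω₁ = π ω₂) (t : W) :
    ((lis ω₁).count t : ZMod 2) = (lis ω₂).count t := by
  have := congrArg (fun f => (f ((π ω₁)⁻¹ * t * π ω₁, 0)).2)
    (cs.parityAction_eq_of_wordProd_eq h)
  simpa [parityAction, h, mul_assoc] using this

end Parity

theorem mem_leftInvSeq_of_isRightDescent {ω : List B} {i : B}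
    (h : cs.IsRightDescent (π ω) i) : π ω * s i * (π ω)⁻¹ ∈ lis ω := by
  classical
  obtain ⟨τ, hτ, hτω⟩ := cs.exists_isReduced (π ω * s i)
  have hπ : π (τ.concat i) = π ω := by rw [wordProd_concat, ← hτω, simple_mul_simple_cancel_right]
  have hred : cs.IsReduced (τ.concat i) := by
    rw [IsReduced, hπ, List.length_concat, ← hτ.eq, ← hτω, (cs.isRightDescent_iff).mp h]
  have hone : (lis (τ.concat i)).count (π ω * s i * (π ω)⁻¹) = 1 := by
    apply List.count_eq_one_of_mem hred.nodup_leftInvSeq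
    rw [leftInvSeq_concat, ← hτω]
    simp [mul_assoc]
  have hodd := cs.count_leftInvSeq_eq_of_wordProd_eq hπ (π ω * s i * (π ω)⁻¹)
  rw [hone] at hodd
  refine List.count_pos_iff.mp (Nat.pos_of_ne_zero fun h0 => ?_)
  rw [h0] at hodd
  exact one_ne_zero (by exact_mod_cast hodd)

/-- The exchange property. -/
theorem exists_wordProd_mul_simple_eq_eraseIdx {ω : List B} {i : B}
    (h : cs.IsRightDescent (π ω) i) : ∃ d < ω.length, π ω * s i = π (ω.eraseIdx d) := by
  obtain ⟨d, hd, hdω⟩ := List.mem_iff_getElem.mp (cs.mem_leftInvSeq_of_isRightDescent h)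
  refine ⟨d, by simpa using hd, ?_⟩
  rw [← getD_leftInvSeq_mul_wordProd, List.getD_eq_getElem _ _ hd, hdω, inv_mul_cancel_right]

end CoxeterSystem

theorem Complex.isPrimitiveRoot_exp_two_mul_pi_div {n : ℕ} (hn : n ≠ 0) :
    IsPrimitiveRoot (Complex.exp (↑(2 * (Real.pi / n)) * Complex.I)) n := by
  convert Complex.isPrimitiveRoot_exp n hn using 2
  push_cast
  ring

theorem Real.sin_pi_div_ne_zero {n : ℕ} (hn : 1 < n) : Real.sin (Real.pi / n) ≠ 0 :=
  (Real.sin_pos_of_pos_of_lt_pi (by positivity)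
    (div_lt_self Real.pi_pos (by exact_mod_cast hn))).ne'

namespace CoxeterMatrix

open Finset Complex Matrix

variable {B : Type*} (M : CoxeterMatrix B)

/-- The bilinear form of the geometric representation, `⟪e_a, e_b⟫ = -cos (π / M a b)`. When
`M a b = 0`, Lean's `π / 0 = 0` gives the intended value `-1`. -/
noncomputable def cosForm : Matrix B B ℝ := Matrix.of fun a b => -Real.cos (Real.pi / M a b)

theorem cosForm_apply_self (a : B) : M.cosForm a a = 1 := by
  simp [cosForm]

theorem cosForm_comm (a b : B) : M.cosForm b a = M.cosForm a b := by
  simp [cosForm, M.symmetric b a]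

variable [Fintype B] [DecidableEq B]

noncomputable def geomReflection (a : B) : Function.End (B → ℝ) :=
  fun v => v - (2 * (M.cosForm *ᵥ v) a) • Pi.single a 1

theorem cosForm_mulVec_sub_smul_single (v : B → ℝ) (t : ℝ) (a b : B) :
    (M.cosForm *ᵥ (v - t • Pi.single b 1)) a = (M.cosForm *ᵥ v) a - t * M.cosForm a b := by
  simp [Matrix.mulVec_sub, Matrix.mulVec_smul]

section Pair

variable (a b : B) (v : B → ℝ)

theorem geomReflection_mul_apply :
    (M.geomReflection a * M.geomReflection b) v = v
      - (2 * (M.cosForm *ᵥ v) a + 4 * Real.cos (Real.pi / M a b) * (M.cosForm *ᵥ v) b)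
        • Pi.single a 1
      - (2 * (M.cosForm *ᵥ v) b) • Pi.single b 1 := by
  show M.geomReflection a (M.geomReflection b v) = _
  simp only [geomReflection, cosForm_mulVec_sub_smul_single]
  simp only [cosForm, Matrix.of_apply]
  module

theorem cosForm_mulVec_geomReflection_mul_apply_left :
    (M.cosForm *ᵥ (M.geomReflection a * M.geomReflection b) v) a =
      -(M.cosForm *ᵥ v) a - 2 * Real.cos (Real.pi / M a b) * (M.cosForm *ᵥ v) b := by
  rw [geomReflection_mul_apply, cosForm_mulVec_sub_smul_single, cosForm_mulVec_sub_smul_single,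
    cosForm_apply_self]
  simp only [cosForm, Matrix.of_apply]
  ring

theorem cosForm_mulVec_geomReflection_mul_apply_right :
    (M.cosForm *ᵥ (M.geomReflection a * M.geomReflection b) v) b =
      2 * Real.cos (Real.pi / M a b) * (M.cosForm *ᵥ v) a
        + (4 * Real.cos (Real.pi / M a b) ^ 2 - 1) * (M.cosForm *ᵥ v) b := by
  rw [geomReflection_mul_apply, cosForm_mulVec_sub_smul_single, cosForm_mulVec_sub_smul_single,
    cosForm_apply_self, cosForm_comm]
  simp only [cosForm, Matrix.of_apply]
  ring

/-- In the coordinates `(re z, -cos θ re z + sin θ im z)` of `(⟪e_a, v⟫, ⟪e_b, v⟫)`, where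
`θ = π / M a b`, the element `σ_a σ_b` acts as the rotation by `2θ`. -/
theorem cosForm_mulVec_geomReflection_mul_pow_apply (z : ℂ)
    (ha : (M.cosForm *ᵥ v) a = z.re)
    (hb : (M.cosForm *ᵥ v) b =
      -Real.cos (Real.pi / M a b) * z.re + Real.sin (Real.pi / M a b) * z.im) (k : ℕ) :
    let w := exp (↑(2 * (Real.pi / M a b)) * I) ^ k * z
    (M.cosForm *ᵥ ((M.geomReflection a * M.geomReflection b) ^ k) v) a = w.re ∧
    (M.cosForm *ᵥ ((M.geomReflection a * M.geomReflection b) ^ k) v) b =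
      -Real.cos (Real.pi / M a b) * w.re + Real.sin (Real.pi / M a b) * w.im := by
  induction k with
  | zero => simp [ha, hb, Function.End.one_def]
  | succ k ih =>
    obtain ⟨iha, ihb⟩ := ih
    rw [pow_succ', pow_succ', mul_assoc]
    set w := exp (↑(2 * (Real.pi / M a b)) * I) ^ k * z
    change (M.cosForm *ᵥ (M.geomReflection a * M.geomReflection b)
      (((M.geomReflection a * M.geomReflection b) ^ k) v)) a = _ ∧ (M.cosForm *ᵥ
        (M.geomReflection a * M.geomReflection b)
          (((M.geomReflection a * M.geomReflection b) ^ k) v)) b = _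
    rw [cosForm_mulVec_geomReflection_mul_apply_left,
      cosForm_mulVec_geomReflection_mul_apply_right, iha, ihb]
    simp only [Complex.mul_re, Complex.mul_im, exp_ofReal_mul_I_re, exp_ofReal_mul_I_im,
      Real.cos_two_mul, Real.sin_two_mul]
    constructor
    · ring
    · linear_combination -2 * Real.cos (Real.pi / M a b) * w.re
        * Real.sin_sq_add_cos_sq (Real.pi / M a b)

theorem geomReflection_mul_pow_apply (k : ℕ) :
    ((M.geomReflection a * M.geomReflection b) ^ k) v = v
      - (∑ l ∈ range k, (2 * (M.cosForm *ᵥ ((M.geomReflection a * M.geomReflection b) ^ l) v) a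
          + 4 * Real.cos (Real.pi / M a b) *
            (M.cosForm *ᵥ ((M.geomReflection a * M.geomReflection b) ^ l) v) b)) • Pi.single a 1
      - (∑ l ∈ range k, 2 * (M.cosForm *ᵥ ((M.geomReflection a * M.geomReflection b) ^ l) v) b)
        • Pi.single b 1 := by
  induction k with
  | zero => simp [Function.End.one_def]
  | succ k ih =>
    rw [pow_succ']
    change (M.geomReflection a * M.geomReflection b)
      (((M.geomReflection a * M.geomReflection b) ^ k) v) = _
    rw [geomReflection_mul_apply, sum_range_succ, sum_range_succ]
    nth_rw 1 [ih]
    module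

end Pair

theorem sum_range_cosForm_mulVec_geomReflection_mul_pow {a b : B} (hab : a ≠ b) (h0 : M a b ≠ 0)
    (v : B → ℝ) :
    ∑ l ∈ range (M a b), (M.cosForm *ᵥ ((M.geomReflection a * M.geomReflection b) ^ l) v) a = 0 ∧
      ∑ l ∈ range (M a b),
        (M.cosForm *ᵥ ((M.geomReflection a * M.geomReflection b) ^ l) v) b = 0 := by
  have hm : 1 < M a b := lt_of_le_of_ne (Nat.pos_of_ne_zero h0) (M.off_diagonal a b hab).symm
  set z : ℂ := ⟨(M.cosForm *ᵥ v) a,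
    ((M.cosForm *ᵥ v) b + Real.cos (Real.pi / M a b) * (M.cosForm *ᵥ v) a) /
      Real.sin (Real.pi / M a b)⟩
  have hrot := M.cosForm_mulVec_geomReflection_mul_pow_apply a b v z rfl
    (by rw [mul_div_cancel₀ _ (Real.sin_pi_div_ne_zero hm)]; ring)
  have hgeom : ∑ l ∈ range (M a b), exp (↑(2 * (Real.pi / M a b)) * I) ^ l * z = 0 := by
    rw [← sum_mul, (Complex.isPrimitiveRoot_exp_two_mul_pi_div h0).geom_sum_eq_zero hm, zero_mul]
  have hre := congrArg Complex.re hgeom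
  have him := congrArg Complex.im hgeom
  rw [Complex.re_sum, zero_re] at hre
  rw [Complex.im_sum, zero_im] at him
  simp only [(hrot _).1, (hrot _).2, sum_add_distrib, ← mul_sum, hre, him, mul_zero, add_zero,
    and_self]

theorem isLiftable_geomReflection : M.IsLiftable M.geomReflection := by
  intro a b
  rcases eq_or_ne a b with rfl | hab
  · funext v
    rw [M.diagonal, pow_one, geomReflection_mul_apply, M.diagonal]
    simp only [Nat.cast_one, div_one, Real.cos_pi, Function.End.one_def, id]
    module
  by_cases h0 : M a b = 0
  · rw [h0, pow_zero]
  funext v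
  obtain ⟨hsa, hsb⟩ := M.sum_range_cosForm_mulVec_geomReflection_mul_pow hab h0 v
  rw [geomReflection_mul_pow_apply, sum_add_distrib, ← mul_sum, ← mul_sum, ← mul_sum, hsa, hsb]
  simp [Function.End.one_def]

theorem dvd_of_geomReflection_mul_pow_eq_one {a b : B} (hab : a ≠ b) {k : ℕ}
    (h : (M.geomReflection a * M.geomReflection b) ^ k = 1) : M a b ∣ k := by
  have hfix : ((M.geomReflection a * M.geomReflection b) ^ k) (Pi.single a 1) = Pi.single a 1 := by
    rw [h]; rfl
  have hrot := M.cosForm_mulVec_geomReflection_mul_pow_apply a b (Pi.single a 1) 1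
    (by simp [cosForm_apply_self]) (by simp [cosForm, M.symmetric b a])
  by_cases h0 : M a b = 0
  · -- here `θ = 0`, and the coefficient of `e_b` in `(σ_a σ_b) ^ k e_a` is `2k`
    have hb := congrFun (M.geomReflection_mul_pow_apply a b (Pi.single a 1) k) b
    simp [hfix, hab.symm, (hrot _).2, h0] at hb
    simp [hb]
  · have hm : 1 < M a b := lt_of_le_of_ne (Nat.pos_of_ne_zero h0) (M.off_diagonal a b hab).symm
    obtain ⟨hre, him⟩ := hrot k
    simp only [hfix, mul_one, Matrix.mulVec_single_one, Matrix.col_apply, cosForm_apply_self,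
      cosForm_comm] at hre him
    rw [← hre, cosForm, Matrix.of_apply, mul_one, left_eq_add, mul_eq_zero] at him
    refine (Complex.isPrimitiveRoot_exp_two_mul_pi_div h0).dvd_of_pow_eq_one k
      (Complex.ext hre.symm (him.resolve_left (Real.sin_pi_div_ne_zero hm)))

end CoxeterMatrix

namespace CoxeterSystem

open List

variable {B : Type*} {W : Type*} [Group W] {M : CoxeterMatrix B} (cs : CoxeterSystem M W)

local prefix:100 "s " => cs.simple
local prefix:100 "π " => cs.wordProd
local prefix:100 "ℓ " => cs.length

theorem orderOf_simple_mul_simple [Finite B] (i j : B) : orderOf (s i * s j) = M i j := by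
  classical
  have := Fintype.ofFinite B
  rcases eq_or_ne i j with rfl | hij
  · simp
  refine Nat.dvd_antisymm (orderOf_dvd_of_pow_eq_one (cs.simple_mul_simple_pow i j)) ?_
  apply M.dvd_of_geomReflection_mul_pow_eq_one hij
  have h := congrArg (cs.lift ⟨_, M.isLiftable_geomReflection⟩) (pow_orderOf_eq_one (s i * s j))
  rwa [map_pow, map_mul, lift_apply_simple, lift_apply_simple, map_one] at h

theorem wordProd_alternatingWord_inv_mul (x y : B) (k : ℕ) :
    (π (alternatingWord y x k))⁻¹ * π (alternatingWord x y k) = (s x * s y) ^ k := by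
  induction k generalizing x y with
  | zero => simp [alternatingWord]
  | succ k ih =>
    rw [alternatingWord_succ, alternatingWord_succ, wordProd_concat, wordProd_concat, mul_inv_rev,
      inv_simple, mul_assoc, ← mul_assoc _ _ (s y), ih y x, ← mul_assoc, ← mul_pow_mul, pow_succ,
      mul_assoc]

theorem mem_alternatingWord {x y c : B} {k : ℕ} (h : c ∈ alternatingWord x y k) :
    c = x ∨ c = y := by
  induction k generalizing x y with
  | zero => simp [alternatingWord] at h
  | succ k ih =>
    rw [alternatingWord_succ, concat_eq_append, mem_append, mem_singleton] at h
    exact h.elim (fun h => (ih h).symm) Or.inr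

theorem eq_alternatingWord_of_isReduced {x y : B} {l : List B} (hl : ∀ c ∈ l, c = x ∨ c = y)
    (hr : cs.IsReduced (l ++ [x])) : l ++ [x] = alternatingWord y x (l.length + 1) := by
  induction l using List.reverseRecOn generalizing x y with
  | nil => rfl
  | append_singleton l c ih =>
    have hc : c = y := by
      refine (hl c (by simp)).resolve_left fun hcx => ?_
      have hπ : π (l ++ [c] ++ [x]) = π l := by
        rw [wordProd_append, wordProd_append, wordProd_singleton, wordProd_singleton, hcx,
          simple_mul_simple_cancel_right]
      have := hr.eq
      rw [hπ] at this
      have := cs.length_wordProd_le l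
      simp_all
    subst hc
    have hr' : cs.IsReduced (l ++ [c]) := by
      have := hr.take (l ++ [c]).length
      rwa [List.take_left] at this
    rw [length_append, length_singleton, alternatingWord_succ, concat_eq_append,
      ← ih (fun d hd => (hl d (by simp [hd])).symm) hr']

theorem not_isRightDescent_wordProd_alternatingWord [Finite B] {x y : B} {k : ℕ}
    (hk : M x y = 0 ∨ k < M x y) (hr : cs.IsReduced (alternatingWord x y k)) :
    ¬ cs.IsRightDescent (π (alternatingWord x y k)) x := by
  intro hdesc
  obtain ⟨d, hd, hdω⟩ := cs.exists_wordProd_mul_simple_eq_eraseIdx hdesc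
  set l := (alternatingWord x y k).eraseIdx d
  have hlen : l.length + 1 = k := by simpa using List.length_eraseIdx_add_one hd
  have hπ : π (l ++ [x]) = π (alternatingWord x y k) := by
    rw [wordProd_append, wordProd_singleton, ← hdω, simple_mul_simple_cancel_right]
  have hred : cs.IsReduced (l ++ [x]) := by
    rw [IsReduced, hπ, hr.eq, length_append, length_singleton, hlen, length_alternatingWord]
  have halt := cs.eq_alternatingWord_of_isReduced
    (fun c hc => mem_alternatingWord ((List.eraseIdx_sublist _ _).subset hc)) hred
  rw [hlen] at halt
  have hdvd : M x y ∣ k := by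
    rw [← cs.orderOf_simple_mul_simple]
    apply orderOf_dvd_of_pow_eq_one
    rw [← wordProd_alternatingWord_inv_mul, ← halt, hπ, inv_mul_cancel]
  rcases hk with h0 | hlt
  · rw [h0, zero_dvd_iff] at hdvd
    omega
  · exact absurd (Nat.le_of_dvd (by omega) hdvd) (by omega)

def IsReducedSuffix (ω : List B) (w : W) : Prop :=
  ∃ u, cs.IsReduced (u ++ ω) ∧ π (u ++ ω) = w

variable {cs}

theorem IsReducedSuffix.length_le {ω : List B} {w : W} (h : cs.IsReducedSuffix ω w) :
    ω.length ≤ ℓ w := by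
  obtain ⟨u, hr, rfl⟩ := h
  rw [hr.eq, length_append]
  omega

theorem IsReducedSuffix.alternatingWord_succ [Finite B] {w : W} {x y : B} {k : ℕ}
    (h : cs.IsReducedSuffix (alternatingWord x y k) w) (hx : cs.IsRightDescent w x)
    (hk : M x y = 0 ∨ k < M x y) : cs.IsReducedSuffix (alternatingWord y x (k + 1)) w := by
  obtain ⟨u, hr, rfl⟩ := h
  obtain ⟨d, hd, hdω⟩ := cs.exists_wordProd_mul_simple_eq_eraseIdx hx
  by_cases hdu : d < u.length
  · have hword : u.eraseIdx d ++ alternatingWord y x (k + 1) =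
        (u ++ alternatingWord x y k).eraseIdx d ++ [x] := by
      rw [eraseIdx_append_of_lt_length hdu, CoxeterSystem.alternatingWord_succ, concat_eq_append,
        append_assoc]
    have hπ : π (u.eraseIdx d ++ alternatingWord y x (k + 1)) = π (u ++ alternatingWord x y k) := by
      rw [hword, wordProd_append, wordProd_singleton, ← hdω, simple_mul_simple_cancel_right]
    refine ⟨u.eraseIdx d, ?_, hπ⟩
    rw [IsReduced, hπ, hr.eq, hword, length_append (as := eraseIdx _ _), length_singleton,
      length_eraseIdx_add_one hd]
  · -- the exchanged letter lies in the alternating suffix, which is impossible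
    rw [eraseIdx_append_of_length_le (not_lt.mp hdu), wordProd_append, wordProd_append,
      mul_assoc] at hdω
    have hralt : cs.IsReduced (alternatingWord x y k) := by simpa using hr.drop u.length
    refine absurd ?_ (cs.not_isRightDescent_wordProd_alternatingWord hk hralt)
    rw [IsRightDescent, mul_left_cancel hdω, hralt.eq, length_alternatingWord]
    calc ℓ (π _) ≤ _ := cs.length_wordProd_le _
      _ < k := by
        rw [length_eraseIdx_of_lt (by simp at hd ⊢; omega), length_alternatingWord]
        simp at hd
        omega

theorem isReducedSuffix_alternatingWord [Finite B] {w : W} {i j : B}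
    (hi : cs.IsRightDescent w i) (hj : cs.IsRightDescent w j) {k : ℕ}
    (hk : M i j = 0 ∨ k ≤ M i j) :
    cs.IsReducedSuffix (alternatingWord i j k) w ∧
      cs.IsReducedSuffix (alternatingWord j i k) w := by
  induction k with
  | zero =>
    obtain ⟨u, hu, rfl⟩ := cs.exists_isReduced w
    exact ⟨⟨u, by simpa [alternatingWord] using hu⟩, ⟨u, by simpa [alternatingWord] using hu⟩⟩
  | succ k ih =>
    have hk' : M i j = 0 ∨ k < M i j := hk.imp_right Nat.lt_of_succ_le
    obtain ⟨hij, hji⟩ := ih (hk'.imp_right le_of_lt)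
    exact ⟨hji.alternatingWord_succ hj (M.symmetric i j ▸ hk'), hij.alternatingWord_succ hi hk'⟩

theorem coxeterMatrix_ne_zero_of_isRightDescent [Finite B] {w : W} {i j : B}
    (hi : cs.IsRightDescent w i) (hj : cs.IsRightDescent w j) : M i j ≠ 0 := by
  intro h0
  have := (isReducedSuffix_alternatingWord hi hj (k := ℓ w + 1) (Or.inl h0)).1.length_le
  simp at this


theorem exists_isReduced_braid_move [Finite B] {w : W} {i j : B}
    (hi : cs.IsRightDescent w i) (hj : cs.IsRightDescent w j) :
    ∃ v₁ v₂ : List B, cs.IsReduced (v₁ ++ [i]) ∧ π (v₁ ++ [i]) = w ∧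
      cs.IsReduced (v₂ ++ [j]) ∧ π (v₂ ++ [j]) = w ∧
      ((v₁ ++ [i]).map (braidGen M)).prod = ((v₂ ++ [j]).map (braidGen M)).prod := by
  obtain ⟨u, hu, hπu⟩ := (isReducedSuffix_alternatingWord hi hj (Or.inr le_rfl)).1
  obtain ⟨m, hm⟩ := Nat.exists_eq_succ_of_ne_zero (coxeterMatrix_ne_zero_of_isRightDescent hj hi)
  have hji : braidWord M j i = alternatingWord i j m ++ [i] := by
    rw [braidWord, hm, alternatingWord_succ, concat_eq_append]
  have hij : braidWord M i j = alternatingWord j i m ++ [j] := by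
    rw [braidWord, M.symmetric, hm, alternatingWord_succ, concat_eq_append]
  have hπ : π (u ++ braidWord M j i) = π (u ++ braidWord M i j) := by
    rw [wordProd_append, wordProd_append, wordProd_braidWord_eq]
  refine ⟨u ++ alternatingWord i j m, u ++ alternatingWord j i m, ?_, ?_, ?_, ?_, ?_⟩
  · rw [append_assoc, ← hji, IsReduced, hπ, hu.eq]
    simp [M.symmetric i j]
  · rw [append_assoc, ← hji, hπ, hπu]
  · rwa [append_assoc, ← hij]
  · rw [append_assoc, ← hij, hπu]
  · rw [append_assoc, append_assoc, ← hij, ← hji, map_append, map_append, prod_append,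
      prod_append, prod_map_braidGen_braidWord]

theorem IsReduced.isRightDescent_wordProd_append_singleton {t : List B} {k : B}
    (hr : cs.IsReduced (t ++ [k])) : cs.IsRightDescent (π (t ++ [k])) k := by
  have := cs.length_wordProd_le t
  rw [IsRightDescent, hr.eq, wordProd_append, wordProd_singleton, simple_mul_simple_cancel_right,
    length_append, length_singleton]
  omega

variable (cs)

theorem prod_map_braidGen_eq_of_isReduced [Finite B] {l₁ l₂ : List B}
    (hr₁ : cs.IsReduced l₁) (hr₂ : cs.IsReduced l₂) (h : π l₁ = π l₂) :
    (l₁.map (braidGen M)).prod = (l₂.map (braidGen M)).prod := by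
  obtain ⟨n, hn⟩ : ∃ n, l₁.length = n := ⟨_, rfl⟩
  induction n generalizing l₁ l₂ with
  | zero =>
    have hlen : l₂.length = 0 := by rw [← hr₂.eq, ← h, hr₁.eq, hn]
    rw [List.length_eq_zero_iff.mp hn, List.length_eq_zero_iff.mp hlen]
  | succ n ih =>
    have hlen : l₂.length = n + 1 := by rw [← hr₂.eq, ← h, hr₁.eq, hn]
    obtain ⟨t₁, i, rfl⟩ := (eq_nil_or_concat' l₁).resolve_left (by rintro rfl; simp at hn)
    obtain ⟨t₂, j, rfl⟩ := (eq_nil_or_concat' l₂).resolve_left (by rintro rfl; simp at hlen)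
    have hlast {t t' : List B} {k : B} (hr : cs.IsReduced (t ++ [k]))
        (hr' : cs.IsReduced (t' ++ [k])) (hπ : π (t ++ [k]) = π (t' ++ [k])) (ht : t.length = n) :
        ((t ++ [k]).map (braidGen M)).prod = ((t' ++ [k]).map (braidGen M)).prod := by
      rw [wordProd_append, wordProd_append, mul_left_inj] at hπ
      rw [map_append, map_append, prod_append, prod_append,
        ih (by simpa using hr.take t.length) (by simpa using hr'.take t'.length) hπ ht]
    rcases eq_or_ne i j with rfl | -
    · exact hlast hr₁ hr₂ h (by simpa using hn)
    obtain ⟨v₁, v₂, hv₁, hπ₁, hv₂, hπ₂, hbraid⟩ :=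
      exists_isReduced_braid_move hr₁.isRightDescent_wordProd_append_singleton
        (h ▸ hr₂.isRightDescent_wordProd_append_singleton)
    calc _ = ((v₁ ++ [i]).map (braidGen M)).prod := hlast hr₁ hv₁ hπ₁.symm (by simpa using hn)
      _ = ((v₂ ++ [j]).map (braidGen M)).prod := hbraid
      _ = _ := (hlast hr₂ hv₂ (hπ₂.trans h).symm (by simpa using hlen)).symm

end CoxeterSystem

theorem stmt_0 {B W : Type*} [Finite B] [Group W] (M : CoxeterMatrix B)
    (cs : CoxeterSystem M W) (w : W) (l₁ l₂ : List B)
    (h₁ : cs.wordProd l₁ = w) (h₂ : cs.wordProd l₂ = w)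
    (hr₁ : cs.IsReduced l₁) (hr₂ : cs.IsReduced l₂) :
    (l₁.map (braidGen M)).prod = (l₂.map (braidGen M)).prod :=
  cs.prod_map_braidGen_eq_of_isReduced hr₁ hr₂ (h₁.trans h₂.symm)
end

section
/- Let H be the Hecke algebra over R (the completion of ℚ[v^{±1}] at (v−1)) of the rank-one Coxeter group W = {1, s}, with generator T_s satisfying (T_s − v)(T_s + v⁻¹) = 0. Then the unique element a ∈ RH with a² = 1 and a ≡ s mod (v−1) (i.e. a specializes to s at v = 1 under the isomorphism H/(v−1) ≅ ℚW) is a = (1−v²)/(1+v²) + (2v/(1+v²)) T_s. -/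
/-!
Write `a = c₀ + c₁ T_s`. Then `a² = 1` says `c₀² + c₁² = 1` and `c₁ (2 c₀ + c₁ (v - v⁻¹)) = 0`,
and the specialization condition says `c₁ ≡ 1 mod (v - 1)`. Since `R` is `(v - 1)`-adically
complete, `v - 1` lies in its Jacobson radical, so everything congruent to a unit modulo `v - 1`
is a unit. Hence `c₁` is a unit and `2 c₀ = -c₁ (v - v⁻¹)`; substituting gives
`(c₁ (v + v⁻¹))² = 4`, and as `c₁ (v + v⁻¹) + 2 ≡ 4` is a unit, `c₁ (v + v⁻¹) = 2`.
-/

/-- The Laurent polynomial ring `ℚ[v^{±1}]`. -/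
abbrev Lau : Type := LaurentPolynomial ℚ

/-- The completion `R` of `ℚ[v^{±1}]` at the ideal `(v - 1)`. -/
abbrev Rv : Type :=
  AdicCompletion (Ideal.span {(LaurentPolynomial.T 1 : Lau) - 1}) Lau

/-- The element `v` of `R`. -/
noncomputable def vR : Rv := algebraMap Lau Rv (LaurentPolynomial.T 1)

/-- The element `v⁻¹` of `R`. -/
noncomputable def vRinv : Rv := algebraMap Lau Rv (LaurentPolynomial.T (-1))

section JacobsonRadical

variable {S : Type*} [CommRing S]

lemma isUnit_of_isUnit_mk_jacobson_bot {x : S}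
    (h : IsUnit (Ideal.Quotient.mk (⊥ : Ideal S).jacobson x)) : IsUnit x :=
  haveI := isLocalHom_of_le_jacobson_bot (⊥ : Ideal S).jacobson le_rfl
  IsUnit.of_map (Ideal.Quotient.mk (⊥ : Ideal S).jacobson) x h

variable {v w c₀ c₁ : S}

lemma two_mul_add_eq_zero_and_mul_add_eq_two (hvw : v * w = 1) (h2 : IsUnit (2 : S))
    (hv : v - 1 ∈ (⊥ : Ideal S).jacobson) (hc : c₁ - 1 ∈ (⊥ : Ideal S).jacobson)
    (h0 : c₀ ^ 2 + c₁ ^ 2 = 1) (h1 : c₁ * (2 * c₀ + c₁ * (v - w)) = 0) :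
    2 * c₀ + c₁ * (v - w) = 0 ∧ c₁ * (v + w) = 2 := by
  set π := Ideal.Quotient.mk (⊥ : Ideal S).jacobson
  have hπv : π v = 1 := by rw [← map_one π]; exact Ideal.Quotient.eq.mpr hv
  have hπc : π c₁ = 1 := by rw [← map_one π]; exact Ideal.Quotient.eq.mpr hc
  have hπw : π w = 1 := by simpa [hπv] using congrArg π hvw
  have hπ2 : IsUnit (2 : S ⧸ (⊥ : Ideal S).jacobson) := by
    have := h2.map π; rwa [map_ofNat] at this
  have hlin : 2 * c₀ + c₁ * (v - w) = 0 :=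
    (isUnit_of_isUnit_mk_jacobson_bot (by rw [hπc]; exact isUnit_one)).mul_right_eq_zero.mp h1
  refine ⟨hlin, ?_⟩
  have hsq : (c₁ * (v + w) - 2) * (c₁ * (v + w) + 2) = 0 := by
    linear_combination (c₁ * (v - w) - 2 * c₀) * hlin + 4 * c₁ ^ 2 * hvw + 4 * h0
  have hunit : IsUnit (c₁ * (v + w) + 2) := by
    refine isUnit_of_isUnit_mk_jacobson_bot ?_
    have hπ4 : π (c₁ * (v + w) + 2) = 2 * 2 := by
      rw [map_add, map_mul, map_add, hπv, hπc, hπw, map_ofNat]; norm_num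
    rw [hπ4]
    exact hπ2.mul hπ2
  linear_combination hunit.mul_left_eq_zero.mp hsq

lemma eq_mul_inverse_one_add_sq (hvw : v * w = 1) (h2 : IsUnit (2 : S))
    (hlin : 2 * c₀ + c₁ * (v - w) = 0) (hsum : c₁ * (v + w) = 2) :
    c₀ = (1 - v ^ 2) * Ring.inverse (1 + v ^ 2) ∧ c₁ = 2 * v * Ring.inverse (1 + v ^ 2) := by
  have hunit : IsUnit (1 + v ^ 2) := by
    have h : 1 + v ^ 2 = v * (v + w) := by linear_combination -hvw
    rw [h]
    exact (IsUnit.of_mul_eq_one w hvw).mul (isUnit_of_mul_isUnit_right (hsum ▸ h2))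
  rw [Ring.eq_mul_inverse_iff_mul_eq _ _ _ hunit, Ring.eq_mul_inverse_iff_mul_eq _ _ _ hunit]
  refine ⟨h2.mul_right_injective ?_, by linear_combination v * hsum - c₁ * hvw⟩
  linear_combination (1 + v ^ 2) * hlin + (2 * v * w - 1 - v ^ 2) * hsum + (4 - 2 * c₁ * w) * hvw

end JacobsonRadical

lemma sq_smul_one_add_smul {R A : Type*} [CommRing R] [Ring A] [Algebra R A] {q : R} {T : A}
    (hT : T ^ 2 = q • T + 1) (c₀ c₁ : R) :
    (c₀ • (1 : A) + c₁ • T) ^ 2 = (c₀ ^ 2 + c₁ ^ 2) • 1 + (c₁ * (2 * c₀ + c₁ * q)) • T := by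
  rw [sq] at hT ⊢
  simp only [mul_add, add_mul, Algebra.mul_smul_comm, Algebra.smul_mul_assoc, one_mul, mul_one,
    hT, smul_add, smul_smul]
  module

lemma Module.Basis.eq_repr_zero_smul_add_repr_one_smul {R M : Type*} [Semiring R]
    [AddCommMonoid M] [Module R M] (b : Module.Basis (Fin 2) R M) (x : M) :
    x = b.repr x 0 • b 0 + b.repr x 1 • b 1 := by
  conv_lhs => rw [← b.sum_repr x]
  exact Fin.sum_univ_two _

lemma vR_mul_vRinv : vR * vRinv = 1 := by
  rw [vR, vRinv, ← map_mul, ← LaurentPolynomial.T_add]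
  norm_num [LaurentPolynomial.T_zero]

lemma isUnit_two_Rv : IsUnit (2 : Rv) := by
  have := (isUnit_iff_ne_zero.mpr (two_ne_zero (α := ℚ))).map (algebraMap ℚ Rv)
  rwa [map_ofNat] at this

lemma vR_sub_one_mem_jacobson : vR - 1 ∈ (⊥ : Ideal Rv).jacobson := by
  set I : Ideal Lau := Ideal.span {LaurentPolynomial.T 1 - 1}
  have := AdicCompletion.isAdicComplete_self I (Submodule.fg_span_singleton _)
  have hmem : vR - 1 ∈ I.map (algebraMap Lau Rv) := by
    rw [vR, ← map_one (algebraMap Lau Rv), ← map_sub]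
    exact Ideal.mem_map_of_mem _ (Ideal.mem_span_singleton_self _)
  exact IsAdicComplete.le_jacobson_bot _ hmem

theorem stmt_9 {A : Type*} [Ring A] [Algebra Rv A] (Ts : A)
    (bas : Module.Basis (Fin 2) Rv A) (hb0 : bas 0 = 1) (hb1 : bas 1 = Ts)
    (hquad : Ts ^ 2 = (vR - vRinv) • Ts + 1)
    (a : A) (ha : a ^ 2 = 1)
    (hsp : ∃ y : A, a - Ts = algebraMap Rv A (vR - 1) * y) :
    a = algebraMap Rv A ((1 - vR ^ 2) * Ring.inverse (1 + vR ^ 2)) +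
        algebraMap Rv A (2 * vR * Ring.inverse (1 + vR ^ 2)) * Ts := by
  have hli : LinearIndependent Rv ![(1 : A), Ts] := by
    convert bas.linearIndependent
    ext i; fin_cases i <;> simp [hb0, hb1]
  obtain ⟨y, hy⟩ := hsp
  have ha' := bas.eq_repr_zero_smul_add_repr_one_smul a
  have hy' := bas.eq_repr_zero_smul_add_repr_one_smul y
  rw [hb0, hb1] at ha' hy'
  set c₀ := bas.repr a 0
  set c₁ := bas.repr a 1
  obtain ⟨h0, h1⟩ := hli.eq_of_pair (s' := 1) (t' := 0) <| by
    rw [← sq_smul_one_add_smul hquad, ← ha', ha, one_smul, zero_smul, add_zero]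
  obtain ⟨-, hc⟩ := hli.eq_of_pair (s := c₀) (t := c₁ - 1)
    (s' := (vR - 1) * bas.repr y 0) (t' := (vR - 1) * bas.repr y 1) <| by
    rw [← Algebra.smul_def, hy'] at hy
    linear_combination (norm := module) hy - ha'
  obtain ⟨hlin, hsum⟩ := two_mul_add_eq_zero_and_mul_add_eq_two vR_mul_vRinv isUnit_two_Rv
    vR_sub_one_mem_jacobson (hc ▸ Ideal.mul_mem_right _ _ vR_sub_one_mem_jacobson) h0 h1
  obtain ⟨hc₀, hc₁⟩ := eq_mul_inverse_one_add_sq vR_mul_vRinv isUnit_two_Rv hlin hsum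
  rw [ha', ← hc₀, ← hc₁, Algebra.smul_def, Algebra.smul_def, mul_one]
end

section
/- Let W be a finite Coxeter group with longest element w₀, and H_W its Hecke algebra over R, the completion of ℚ[v^{±1}] at (v−1). Assume the center Z(RH_W) is isomorphic as an R-algebra to Rⁿ for some n. Then there is at most one element w̃₀ ∈ RH_W satisfying: (i) w̃₀² = 1; (ii) w̃₀ specializes to w₀ at v = 1; (iii) w̃₀ T_s w̃₀⁻¹ = T_{w₀sw₀} for all s ∈ S. -/
/-!
If `a` and `b` both satisfy (i)–(iii), then `z = b a` commutes with every `T_s`, hence with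
every `T_w` and so is central; centrality gives `z² = 1`, and (ii) gives `z ≡ 1 mod (v - 1)`.
Since `2` is invertible, `w = z - 1` satisfies `w = -½ w²`, so `w ≡ 0` modulo every power
of `v - 1`. As `R H_W` is free over the `(v - 1)`-adically separated ring `R`, this forces
`w = 0`, i.e. `a = b`.
-/

lemma vR_sub_one_eq_algebraMap : vR - 1 = algebraMap Lau Rv (LaurentPolynomial.T 1 - 1) := by
  rw [map_sub, map_one]; rfl

lemma eq_zero_of_forall_eq_vR_sub_one_pow_mul {x : Rv}
    (h : ∀ k : ℕ, ∃ y, x = (vR - 1) ^ k * y) : x = 0 := by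
  refine IsHausdorff.haus
    (inferInstance : IsHausdorff (Ideal.span {(LaurentPolynomial.T 1 : Lau) - 1}) Rv) x
    fun k => SModEq.zero.mpr ?_
  obtain ⟨y, rfl⟩ := h k
  rw [vR_sub_one_eq_algebraMap, ← map_pow, ← Algebra.smul_def]
  exact Submodule.smul_mem_smul (Ideal.pow_mem_pow (Ideal.mem_span_singleton_self _) k)
    Submodule.mem_top

lemma Module.Basis.eq_zero_of_forall_eq_vR_sub_one_pow_smul {ι M : Type*} [AddCommGroup M]
    [Module Rv M] (bas : Module.Basis ι Rv M) {x : M}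
    (h : ∀ k : ℕ, ∃ y, x = (vR - 1) ^ k • y) : x = 0 := by
  refine bas.repr.injective (Finsupp.ext fun i => ?_)
  rw [map_zero, Finsupp.zero_apply]
  refine eq_zero_of_forall_eq_vR_sub_one_pow_mul fun k => ?_
  obtain ⟨y, rfl⟩ := h k
  exact ⟨bas.repr y i, by rw [map_smul, Finsupp.smul_apply, smul_eq_mul]⟩

noncomputable instance : Invertible (2 : Rv) :=
  (Invertible.map (algebraMap ℚ Rv) 2).copy 2 (map_ofNat _ 2).symm

/-- Writing `w = u - 1`, `u² = 1` reads `w = -⅟2 • w²`, and each application of this identity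
gains one more factor of `r`. -/
lemma exists_sub_one_eq_pow_smul_of_sq_eq_one {R A : Type*} [CommRing R] [Invertible (2 : R)]
    [Ring A] [Algebra R A] {r : R} {u c : A} (hu : u ^ 2 = 1) (hc : u - 1 = r • c) :
    ∀ k : ℕ, ∃ y, u - 1 = r ^ k • y := by
  have hsq : u - 1 = -(⅟2 : R) • ((u - 1) * (u - 1)) := by
    have h : (u - 1) * (u - 1) = -(2 : R) • (u - 1) := by
      calc (u - 1) * (u - 1) = u ^ 2 - 2 * u + 1 := by noncomm_ring
        _ = -(2 : R) • (u - 1) := by rw [hu, neg_smul, ofNat_smul_eq_nsmul]; noncomm_ring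
    rw [h, smul_smul, neg_mul_neg, invOf_mul_self, one_smul]
  intro k
  induction k with
  | zero => exact ⟨u - 1, by rw [pow_zero, one_smul]⟩
  | succ k ih =>
    obtain ⟨y, hy⟩ := ih
    refine ⟨-(⅟2 : R) • (y * c), ?_⟩
    conv_lhs => rw [hsq]
    nth_rewrite 1 [hy]
    rw [hc, smul_mul_smul_comm, smul_smul, smul_comm, pow_succ, mul_smul]

lemma commute_mul_of_mul_mul_eq {G : Type*} [Monoid G] {a b x : G} (ha : a * a = 1)
    (hb : b * b = 1) (h : a * x * a = b * x * b) : Commute (b * a) x := by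
  calc b * a * x = b * (a * x * a) * a := by simp [mul_assoc, ha]
    _ = b * (b * x * b) * a := by rw [h]
    _ = x * (b * a) := by simp [← mul_assoc, hb]

lemma mul_self_eq_one_of_commute {G : Type*} [Monoid G] {a b : G} (ha : a * a = 1)
    (hb : b * b = 1) (h : Commute (b * a) a) : b * a * (b * a) = 1 := by
  have hbab : b = a * b * a := by
    calc b = b * a * a := by rw [mul_assoc, ha, mul_one]
      _ = a * b * a := by rw [h.eq, mul_assoc]
  calc b * a * (b * a) = b * (a * b * a) := by simp only [mul_assoc]
    _ = 1 := by rw [← hbab, hb]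

section Hecke

variable {B W : Type*} [Group W] {M : CoxeterMatrix B} (cs : CoxeterSystem M W)
  {A : Type*} [Monoid A] {T : W → A}

lemma commute_T_of_commute_T_simple (hT1 : T 1 = 1)
    (hTmul : ∀ (i : B) (w : W), cs.length (cs.simple i * w) = cs.length w + 1 →
      T (cs.simple i * w) = T (cs.simple i) * T w)
    {z : A} (hz : ∀ i, Commute z (T (cs.simple i))) (w : W) : Commute z (T w) := by
  induction hl : cs.length w generalizing w with
  | zero => rw [cs.length_eq_zero_iff.mp hl, hT1]; exact Commute.one_right z
  | succ k ih =>
    have hw : w ≠ 1 := by rintro rfl; simp at hl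
    obtain ⟨i, hi⟩ := cs.exists_leftDescent_of_ne_one hw
    have hlen : cs.length (cs.simple i * w) + 1 = cs.length w := cs.isLeftDescent_iff.mp hi
    have hTw : T w = T (cs.simple i) * T (cs.simple i * w) := by
      conv_lhs => rw [← cs.simple_mul_simple_cancel_left (w := w) i]
      exact hTmul i _ (by rw [cs.simple_mul_simple_cancel_left, hlen])
    rw [hTw]
    exact (hz i).mul_right (ih _ (by omega))

end Hecke

lemma Module.Basis.commute_of_forall_commute {ι R A : Type*} [CommSemiring R] [Semiring A]
    [Algebra R A] (bas : Module.Basis ι R A) {z : A} (h : ∀ i, Commute z (bas i)) (x : A) :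
    Commute z x := by
  have heq : LinearMap.mulLeft R z = LinearMap.mulRight R z := bas.ext h
  exact DFunLike.congr_fun heq x

theorem stmt_11_general {B W : Type*} [Group W] {M : CoxeterMatrix B}
    (cs : CoxeterSystem M W)
    (w0 : W)
    -- the Hecke algebra `R H_W`: free `R`-module with basis `(T_w)_{w ∈ W}`
    {A : Type*} [Ring A] [Algebra Rv A] (T : W → A)
    (bas : Module.Basis W Rv A) (hbas : ∀ w, bas w = T w) (hT1 : T 1 = 1)
    (hTmul : ∀ (i : B) (w : W), cs.length (cs.simple i * w) = cs.length w + 1 →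
      T (cs.simple i * w) = T (cs.simple i) * T w) :
    ∀ a b : A,
      (a ^ 2 = 1 ∧ (∃ y, a - T w0 = algebraMap Rv A (vR - 1) * y) ∧
        ∀ i : B, a * T (cs.simple i) * a = T (w0 * cs.simple i * w0)) →
      (b ^ 2 = 1 ∧ (∃ y, b - T w0 = algebraMap Rv A (vR - 1) * y) ∧
        ∀ i : B, b * T (cs.simple i) * b = T (w0 * cs.simple i * w0)) →
      a = b := by
  rintro a b ⟨ha, ⟨ya, hya⟩, hconj_a⟩ ⟨hb, ⟨yb, hyb⟩, hconj_b⟩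
  rw [sq] at ha hb
  have hbaa : b * a * a = b := by rw [mul_assoc, ha, mul_one]
  have hz_central : ∀ x, Commute (b * a) x :=
    bas.commute_of_forall_commute fun w => hbas w ▸ commute_T_of_commute_T_simple cs hT1 hTmul
      (fun i => commute_mul_of_mul_mul_eq ha hb ((hconj_a i).trans (hconj_b i).symm)) w
  have hz_sq : (b * a) ^ 2 = 1 := by
    rw [sq]; exact mul_self_eq_one_of_commute ha hb (hz_central a)
  have hz_sub : b * a - 1 = (vR - 1) • ((yb - ya) * a) := by
    rw [Algebra.smul_def, ← mul_assoc, mul_sub, ← hya, ← hyb, ← ha]; noncomm_ring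
  have hz : b * a = 1 := sub_eq_zero.mp <| bas.eq_zero_of_forall_eq_vR_sub_one_pow_smul <|
    exists_sub_one_eq_pow_smul_of_sq_eq_one hz_sq hz_sub
  rw [← hbaa, hz, one_mul]

theorem stmt_11 {B W : Type*} [Group W] [Finite W] {M : CoxeterMatrix B}
    (cs : CoxeterSystem M W)
    (w0 : W) (hw0 : ∀ u : W, cs.length u ≤ cs.length w0)
    -- the Hecke algebra `R H_W`: free `R`-module with basis `(T_w)_{w ∈ W}`
    {A : Type*} [Ring A] [Algebra Rv A] (T : W → A)
    (bas : Module.Basis W Rv A) (hbas : ∀ w, bas w = T w) (hT1 : T 1 = 1)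
    (hTmul : ∀ (i : B) (w : W), cs.length (cs.simple i * w) = cs.length w + 1 →
      T (cs.simple i * w) = T (cs.simple i) * T w)
    (hquad : ∀ i : B,
      (T (cs.simple i) - algebraMap Rv A vR) * (T (cs.simple i) + algebraMap Rv A vRinv) = 0)
    -- the center of `R H_W` is isomorphic to `Rⁿ`
    (n : ℕ) (hZ : Nonempty ((Subalgebra.center Rv A) ≃ₐ[Rv] (Fin n → Rv))) :
    ∀ a b : A,
      (a ^ 2 = 1 ∧ (∃ y, a - T w0 = algebraMap Rv A (vR - 1) * y) ∧
        ∀ i : B, a * T (cs.simple i) * a = T (w0 * cs.simple i * w0)) →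
      (b ^ 2 = 1 ∧ (∃ y, b - T w0 = algebraMap Rv A (vR - 1) * y) ∧
        ∀ i : B, b * T (cs.simple i) * b = T (w0 * cs.simple i * w0)) →
      a = b :=
  stmt_11_general cs w0 T bas hbas hT1 hTmul
end

section
/- Let W = I₂(m) be the dihedral Coxeter group of order 2m (m ≥ 3), with S = {s₁, s₂}. Then the cactus group C_W is generated by γ_{s₁}, γ_{s₂}, γ_S subject only to the relations γ_{s_i}² = γ_S² = 1 and γ_S γ_{s_i} γ_S = γ_{s_{3−i}} if m is odd, γ_S γ_{s_i} γ_S = γ_{s_i} if m is even. In particular, C_{I₂(m)} is isomorphic to (ℤ/2 * ℤ/2) × ℤ/2 when m is even, and to (ℤ/2 * ℤ/2) ⋊ ℤ/2 (with ℤ/2 swapping the two free factors) when m is odd. -/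
/-!
Let `W = I₂(m)` be the dihedral Coxeter group of order `2m` (`m ≥ 3`), with
`S = {s₁, s₂}`. The cactus group `C_W` is generated by `γ_{s₁}, γ_{s₂}, γ_S` subject
only to the relations `γ_{s_i}² = γ_S² = 1` and `γ_S γ_{s_i} γ_S = γ_{s_{3-i}}` if `m`
is odd, `γ_S γ_{s_i} γ_S = γ_{s_i}` if `m` is even. In particular `C_{I₂(m)}` is
isomorphic to `(ℤ/2 * ℤ/2) × ℤ/2` when `m` is even, and to `(ℤ/2 * ℤ/2) ⋊ ℤ/2` (with
`ℤ/2` swapping the two free factors) when `m` is odd.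
-/

open CoxeterSystem Monoid

variable {B W : Type*} [DecidableEq B] [Group W] {M : CoxeterMatrix B}

/-- The standard parabolic subgroup `W_I`. -/
def parabolic (cs : CoxeterSystem M W) (I : Finset B) : Subgroup W :=
  Subgroup.closure (cs.simple '' (I : Set B))

/-- A subset `I ⊆ S` is spherical if `W_I` is finite. -/
def IsSpherical (cs : CoxeterSystem M W) (I : Finset B) : Prop :=
  Finite (parabolic cs I)

/-- The spherical subsets of `S`; these index the generators of the cactus group. -/
def Sph (cs : CoxeterSystem M W) : Type _ := {I : Finset B // IsSpherical cs I}

open scoped Classical in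
/-- The longest element `w_I` of the finite standard parabolic subgroup `W_I`. -/
noncomputable def longest (cs : CoxeterSystem M W) (I : Finset B) : W :=
  if h : ∃ w ∈ parabolic cs I, ∀ u ∈ parabolic cs I, cs.length u ≤ cs.length w then
    h.choose
  else 1

/-- The defining relations of the cactus group `C_W`. -/
noncomputable def cactusRels (M : CoxeterMatrix B) (cs : CoxeterSystem M W) :
    Set (FreeGroup (Sph cs)) :=
  {r | (∃ I : Sph cs, r = .of I * .of I) ∨
    (∃ I J U : Sph cs, Disjoint (I.1 : Finset B) J.1 ∧
      (∀ i ∈ I.1, ∀ j ∈ J.1, M i j = 2) ∧ U.1 = I.1 ∪ J.1 ∧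
      r = .of I * .of J * (.of U)⁻¹) ∨
    (∃ I J K : Sph cs, I.1 ⊆ J.1 ∧
      (cs.simple '' (K.1 : Set B)) =
        (fun w => longest cs J.1 * w * (longest cs J.1)⁻¹) '' (cs.simple '' (I.1 : Set B)) ∧
      r = .of I * .of J * (.of K)⁻¹ * (.of J)⁻¹)}

/-- The cactus group `C_W` of the Coxeter system `(W, S)`. -/
noncomputable abbrev CactusGroup (M : CoxeterMatrix B) (cs : CoxeterSystem M W) : Type _ :=
  PresentedGroup (cactusRels M cs)

/-- The Coxeter matrix of the dihedral group `I₂(m)`. -/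
def I2 (m : ℕ) (hm : 3 ≤ m) : CoxeterMatrix (Fin 2) where
  M := Matrix.of fun i j => if i = j then 1 else m
  isSymm := by
    ext i j
    simp only [Matrix.transpose_apply, Matrix.of_apply]
    by_cases h : i = j <;> simp [h, eq_comm]
  diagonal i := by simp
  off_diagonal i j h := by simp [h]; omega

/-- The explicit relations for the cactus group of `I₂(m)`: generators
`0 ↦ γ_{s₁}`, `1 ↦ γ_{s₂}`, `2 ↦ γ_S`; relations `γ_{s_i}² = γ_S² = 1` and
`γ_S γ_{s_i} γ_S = γ_{s_{3-i}}` (`m` odd), `γ_S γ_{s_i} γ_S = γ_{s_i}` (`m` even). -/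
def dihedralCactusRels (m : ℕ) : Set (FreeGroup (Fin 3)) :=
  {.of 0 * .of 0, .of 1 * .of 1, .of 2 * .of 2,
    .of 2 * .of 0 * .of 2 * (.of (if Even m then 0 else 1))⁻¹,
    .of 2 * .of 1 * .of 2 * (.of (if Even m then 1 else 0))⁻¹}

/-- The group `ℤ/2`. -/
abbrev C2 : Type := Multiplicative (ZMod 2)

/-!
Every subset of `S` is spherical and `γ_∅ = 1`, so the cactus relations only involve the
conjugation action of `w_S` and of the longest elements `w_{s_i} ∈ ⟨s_i⟩`, which centralise `s_i`.
Reduced words of `I₂(m)` alternate, so all lengths are at most `m` and, by the braid relation,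
an element of length `m` is the alternating product of length `m`. That product does have
length `m`: `W` acts on the `2m` chambers of the `m`-gon, and the distance from chamber `0` to
its image bounds the length from below. Hence `w_S` is the alternating product, and the braid
relation gives `w_S s_i w_S = s_{σ i}` with `σ` the identity for `m` even and the swap for `m`
odd. The resulting presentation is that of `(ℤ/2 * ℤ/2) ⋊ ℤ/2`, with `ℤ/2` acting through `σ`.
-/

theorem mul_mul_inv_mul_inv_eq_one_iff {G : Type*} [Group G] {a b c : G} :
    a * b * c⁻¹ * b⁻¹ = 1 ↔ a * b = b * c := by
  rw [mul_inv_eq_one, mul_inv_eq_iff_eq_mul]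

theorem mul_mul_mul_inv_eq_one_iff {G : Type*} [Group G] {a b c : G} (hc : c * c = 1) :
    c * a * c * b⁻¹ = 1 ↔ a * c = c * b := by
  rw [mul_inv_eq_one]
  constructor
  · rintro rfl
    rw [← mul_assoc, ← mul_assoc, hc, one_mul]
  · intro h
    rw [mul_assoc c a c, h, ← mul_assoc, hc, one_mul]

theorem Finset.fin_two_cases (I : Finset (Fin 2)) :
    I = ∅ ∨ (∃ i, I = {i}) ∨ I = Finset.univ := by
  revert I; decide

theorem Finset.eq_empty_or_eq_of_subset_of_ne_univ {I J : Finset (Fin 2)} (hIJ : I ⊆ J)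
    (hJ : J ≠ Finset.univ) : I = ∅ ∨ I = J := by
  revert I J; decide

theorem Equiv.subLeft_mul_subLeft_pow {G : Type*} [AddCommGroup G] (a b : G) (n : ℕ) (c : G) :
    ((Equiv.subLeft a * Equiv.subLeft b) ^ n) c = c + n • (a - b) := by
  induction n with
  | zero => simp
  | succ n ih =>
    rw [pow_succ', Equiv.Perm.mul_apply, ih, succ_nsmul, Equiv.Perm.mul_apply,
      Equiv.subLeft_apply, Equiv.subLeft_apply]
    abel

theorem ZMod.natAbs_valMinAbs_natCast_of_le_half {n a : ℕ} (ha : a ≤ n / 2) :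
    ((a : ZMod n).valMinAbs).natAbs = a := by
  rw [ZMod.valMinAbs_natCast_of_le_half ha, Int.natAbs_natCast]

namespace C2

theorem eq_one_or_eq_ofAdd_one (x : C2) : x = 1 ∨ x = Multiplicative.ofAdd 1 := by
  revert x; decide

theorem ofAdd_one_mul_self : (Multiplicative.ofAdd 1 * Multiplicative.ofAdd 1 : C2) = 1 := rfl

def lift {G : Type*} [Group G] (g : G) (hg : g * g = 1) : C2 →* G where
  toFun x := g ^ x.toAdd.val
  map_one' := pow_zero g
  map_mul' x y := by
    rw [toAdd_mul, ZMod.val_add, ← pow_eq_pow_mod _ (by rw [sq, hg]), pow_add]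

@[simp]
theorem lift_ofAdd_one {G : Type*} [Group G] (g : G) (hg : g * g = 1) :
    lift g hg (Multiplicative.ofAdd 1) = g :=
  pow_one g

theorem hom_ext {G : Type*} [Monoid G] {f g : C2 →* G}
    (h : f (Multiplicative.ofAdd 1) = g (Multiplicative.ofAdd 1)) : f = g := by
  refine MonoidHom.ext fun x => ?_
  obtain rfl | rfl := eq_one_or_eq_ofAdd_one x
  · simp
  · exact h

end C2

namespace CoxeterSystem

omit [DecidableEq B]

variable (cs : CoxeterSystem M W)

theorem ne_of_isReduced_append_pair {ω : List B} {i j : B}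
    (h : cs.IsReduced (ω ++ [i, j])) : i ≠ j := by
  rintro rfl
  have hprod : cs.wordProd (ω ++ [i, i]) = cs.wordProd ω := by
    rw [wordProd_append, wordProd_cons, wordProd_singleton, simple_mul_simple_self, mul_one]
  have := cs.length_wordProd_le ω
  rw [IsReduced, hprod] at h
  simp only [List.length_append, List.length_cons, List.length_nil] at h
  omega

theorem wordProd_braidWord_mul_simple (i i' : B) :
    cs.wordProd (braidWord M i' i) * cs.simple i =
      cs.simple (if Even (M i i') then i else i') * cs.wordProd (braidWord M i' i) := by
  have hbraid := cs.wordProd_braidWord_eq i i'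
  rw [braidWord, braidWord, M.symmetric i' i] at *
  generalize M i i' = n at *
  cases n with
  | zero => simp [alternatingWord]
  | succ n =>
    have hcons := congrArg cs.wordProd (alternatingWord_succ' i i' n)
    rw [hbraid, wordProd_cons] at hcons
    have hconcat : cs.wordProd (alternatingWord i' i (n + 1)) * cs.simple i =
        cs.wordProd (alternatingWord i i' n) := by
      rw [alternatingWord_succ, wordProd_concat, simple_mul_simple_cancel_right]
    rw [hconcat, hcons, ← mul_assoc]
    by_cases hn : Even n <;> simp [hn, Nat.even_add_one]

theorem parabolic_univ [Fintype B] : parabolic cs Finset.univ = ⊤ := by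
  rw [parabolic, Finset.coe_univ, Set.image_univ, cs.subgroup_closure_range_simple]

theorem longest_mem_parabolic (I : Finset B) : longest cs I ∈ parabolic cs I := by
  unfold longest
  split_ifs with h
  · exact h.choose_spec.1
  · exact one_mem _

theorem length_le_length_longest {I : Finset B} (hI : IsSpherical cs I) {u : W}
    (hu : u ∈ parabolic cs I) : cs.length u ≤ cs.length (longest cs I) := by
  have hex : ∃ w ∈ parabolic cs I, ∀ u ∈ parabolic cs I, cs.length u ≤ cs.length w :=
    Set.exists_max_image (parabolic cs I : Set W) cs.length (@Set.toFinite _ _ hI)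
      ⟨1, one_mem _⟩
  unfold longest
  rw [dif_pos hex]
  exact hex.choose_spec.2 u hu

theorem longest_singleton_conj_simple (i : B) :
    longest cs {i} * cs.simple i * (longest cs {i})⁻¹ = cs.simple i := by
  have h := longest_mem_parabolic cs {i}
  rw [parabolic, Finset.coe_singleton, Set.image_singleton, Subgroup.mem_closure_singleton] at h
  obtain ⟨n, hn⟩ := h
  rw [← hn, ((Commute.refl _).zpow_left n).eq, mul_inv_cancel_right]

section FinTwo

variable {M : CoxeterMatrix (Fin 2)} (cs : CoxeterSystem M W)

theorem eq_alternatingWord_of_isReduced_s18 {ω : List (Fin 2)} {x : Fin 2}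
    (h : cs.IsReduced (ω ++ [x])) : ω ++ [x] = alternatingWord (1 - x) x (ω.length + 1) := by
  induction ω using List.reverseRecOn generalizing x with
  | nil => rfl
  | append_singleton ω y ih =>
    have hyx : y ≠ x := cs.ne_of_isReduced_append_pair (by simpa using h)
    have hy : y = 1 - x := by revert hyx; fin_cases x <;> fin_cases y <;> decide
    have hω : ω ++ [y] = alternatingWord (1 - y) y (ω.length + 1) := by
      apply ih
      have := h.take (ω.length + 1)
      rwa [List.take_append_of_le_length (by simp), List.take_of_length_le (by simp)] at this
    rw [alternatingWord_succ, List.length_append, List.length_singleton, List.concat_eq_append,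
      hω, hy, show 1 - (1 - x) = x by omega]

theorem exists_isReduced_alternatingWord (w : W) :
    ∃ x : Fin 2, cs.IsReduced (alternatingWord (1 - x) x (cs.length w)) ∧
      w = cs.wordProd (alternatingWord (1 - x) x (cs.length w)) := by
  obtain ⟨ω, hω, rfl⟩ := cs.exists_isReduced w
  rcases List.eq_nil_or_concat' ω with rfl | ⟨ω, x, rfl⟩
  · exact ⟨0, by simp [IsReduced, alternatingWord]⟩
  · refine ⟨x, ?_⟩
    rw [hω.eq, List.length_append, List.length_singleton,
      ← cs.eq_alternatingWord_of_isReduced_s18 hω]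
    exact ⟨hω, rfl⟩

end FinTwo

end CoxeterSystem

namespace I2

variable {m : ℕ} {hm : 3 ≤ m}

theorem apply_of_ne {i j : Fin 2} (h : i ≠ j) : (I2 m hm) i j = m := by
  simp [I2, h]

theorem apply_zero_one : (I2 m hm) 0 1 = m := apply_of_ne (by decide)

/-- Number the `2m` chambers of the regular `m`-gon cyclically by `ZMod (2 * m)`; `wall i` is the
chamber adjacent to chamber `0` across the mirror of `s_i`, so that `s_i` acts by
`c ↦ wall i - c`. -/
def wall : Fin 2 → ZMod (2 * m) := ![-1, 1]

theorem isLiftable_subLeft_wall :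
    CoxeterMatrix.IsLiftable (I2 m hm) fun i => Equiv.subLeft (wall i : ZMod (2 * m)) := by
  intro i j
  ext c
  rw [Equiv.subLeft_mul_subLeft_pow, Equiv.Perm.one_apply, add_eq_left, nsmul_eq_mul]
  by_cases hij : i = j
  · rw [hij, sub_self, mul_zero]
  have h2m : (2 * m : ZMod (2 * m)) = 0 := by exact_mod_cast ZMod.natCast_self (2 * m)
  have hwall : (wall i - wall j : ZMod (2 * m)) = 2 ∨ (wall i - wall j : ZMod (2 * m)) = -2 := by
    fin_cases i <;> fin_cases j <;> first | exact absurd rfl hij | norm_num [wall]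
  rw [apply_of_ne hij]
  rcases hwall with h | h <;> rw [h]
  · linear_combination h2m
  · linear_combination -h2m

variable (cs : CoxeterSystem (I2 m hm) W)

def chamber (w : W) : ZMod (2 * m) :=
  cs.lift ⟨fun i => Equiv.subLeft (wall i), isLiftable_subLeft_wall⟩ w 0

theorem chamber_one : chamber cs 1 = 0 := by
  simp [chamber]

theorem chamber_simple_mul (i : Fin 2) (w : W) :
    chamber cs (cs.simple i * w) = wall i - chamber cs w := by
  simp [chamber, Equiv.Perm.mul_apply]

theorem natAbs_valMinAbs_chamber_le (w : W) :
    (chamber cs w).valMinAbs.natAbs ≤ cs.length w := by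
  obtain ⟨ω, hω, rfl⟩ := cs.exists_isReduced w
  rw [hω.eq]
  clear hω
  induction ω with
  | nil => simp [chamber_one]
  | cons i ω ih =>
    rw [wordProd_cons, chamber_simple_mul, List.length_cons, sub_eq_add_neg]
    have hwall : (wall i : ZMod (2 * m)).valMinAbs.natAbs ≤ 1 := by
      have h1 := ZMod.natAbs_valMinAbs_natCast_of_le_half (n := 2 * m) (a := 1) (by omega)
      rw [Nat.cast_one] at h1
      fin_cases i <;> simp [wall, ZMod.natAbs_valMinAbs_neg, h1]
    calc _ ≤ _ := ZMod.natAbs_valMinAbs_add_le _ _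
      _ ≤ _ := Int.natAbs_add_le _ _
      _ ≤ 1 + ω.length := by rw [ZMod.natAbs_valMinAbs_neg]; omega
      _ = ω.length + 1 := add_comm _ _

theorem chamber_alternatingWord (n : ℕ) :
    chamber cs (cs.wordProd (alternatingWord 0 1 n)) =
      if Even n then -(n : ZMod (2 * m)) else n := by
  induction n with
  | zero => simp [alternatingWord, chamber_one]
  | succ n ih =>
    rw [alternatingWord_succ', wordProd_cons, chamber_simple_mul, ih]
    by_cases hn : Even n <;> simp [hn, Nat.even_add_one, wall, add_comm, sub_eq_add_neg]

theorem length_wordProd_alternatingWord {n : ℕ} (hn : n ≤ m) :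
    cs.length (cs.wordProd (alternatingWord 0 1 n)) = n := by
  refine le_antisymm ((cs.length_wordProd_le _).trans (by simp)) ?_
  have := natAbs_valMinAbs_chamber_le cs (cs.wordProd (alternatingWord 0 1 n))
  have hn' := ZMod.natAbs_valMinAbs_natCast_of_le_half (n := 2 * m) (a := n) (by omega)
  rw [chamber_alternatingWord] at this
  split_ifs at this <;> simpa [ZMod.natAbs_valMinAbs_neg, hn'] using this

theorem length_le (w : W) : cs.length w ≤ m := by
  obtain ⟨x, hred, -⟩ := cs.exists_isReduced_alternatingWord w
  have hM : (I2 m hm) (1 - x) x = m := apply_of_ne (by fin_cases x <;> decide)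
  by_contra! hlt
  exact cs.not_isReduced_alternatingWord (1 - x) x (by omega) (by omega) hred

theorem finite (cs : CoxeterSystem (I2 m hm) W) : Finite W := by
  refine Set.finite_univ_iff.mp
    (((List.finite_length_le (α := Fin 2) (n := m)).image cs.wordProd).subset ?_)
  rintro w -
  obtain ⟨ω, hω, rfl⟩ := cs.exists_isReduced w
  exact ⟨ω, (hω.eq ▸ length_le cs _ : ω.length ≤ m), rfl⟩

theorem isSpherical (I : Finset (Fin 2)) : IsSpherical cs I :=
  have := finite cs
  Subtype.finite

theorem simple_injective : Function.Injective cs.simple := by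
  have h01 : cs.simple 0 ≠ cs.simple 1 := by
    intro h
    have := length_wordProd_alternatingWord cs (n := 2) (by omega)
    rw [show alternatingWord (0 : Fin 2) 1 2 = [0, 1] from rfl, wordProd_cons,
      wordProd_singleton, h, simple_mul_simple_self, length_one] at this
    omega
  intro i j hij
  fin_cases i <;> fin_cases j
  exacts [rfl, absurd hij h01, absurd hij.symm h01, rfl]

theorem eq_wordProd_braidWord_of_length_eq {w : W} (hw : cs.length w = m) :
    w = cs.wordProd (braidWord (I2 m hm) 0 1) := by
  obtain ⟨x, -, hx⟩ := cs.exists_isReduced_alternatingWord w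
  rw [hx, hw]
  fin_cases x
  · rw [cs.wordProd_braidWord_eq, braidWord, apply_of_ne (by decide)]
    rfl
  · rw [braidWord, apply_zero_one]
    rfl

theorem longest_univ : longest cs Finset.univ = cs.wordProd (braidWord (I2 m hm) 0 1) := by
  apply eq_wordProd_braidWord_of_length_eq
  refine le_antisymm (length_le cs _) ?_
  calc m = cs.length (cs.wordProd (braidWord (I2 m hm) 0 1)) := by
        rw [braidWord, apply_zero_one, length_wordProd_alternatingWord cs le_rfl]
    _ ≤ _ := length_le_length_longest cs (isSpherical cs _) (by simp [cs.parabolic_univ])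

def opposition (m : ℕ) (i : Fin 2) : Fin 2 := if Even m then i else 1 - i

theorem opposition_involutive : Function.Involutive (opposition m) := by
  intro i
  by_cases h : Even m <;> simp [opposition, h]

theorem longest_univ_conj_simple (i : Fin 2) :
    longest cs Finset.univ * cs.simple i * (longest cs Finset.univ)⁻¹ =
      cs.simple (opposition m i) := by
  have h := cs.wordProd_braidWord_mul_simple i (1 - i)
  rw [apply_of_ne (by fin_cases i <;> decide)] at h
  have hbraid : cs.wordProd (braidWord (I2 m hm) (1 - i) i) =
      cs.wordProd (braidWord (I2 m hm) 0 1) := by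
    fin_cases i
    exacts [cs.wordProd_braidWord_eq 1 0, rfl]
  rw [longest_univ, mul_inv_eq_iff_eq_mul, ← hbraid, h, opposition]

theorem longest_conj_simple_of_mem {J : Finset (Fin 2)} {i : Fin 2} (hi : i ∈ J) :
    longest cs J * cs.simple i * (longest cs J)⁻¹ =
      cs.simple (if J = Finset.univ then opposition m i else i) := by
  obtain rfl | ⟨j, rfl⟩ | rfl := J.fin_two_cases
  · simp at hi
  · obtain rfl := Finset.mem_singleton.mp hi
    rw [if_neg (by fin_cases i <;> decide), cs.longest_singleton_conj_simple]
  · rw [if_pos rfl, longest_univ_conj_simple]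

theorem eq_of_image_simple_eq_conj {I J K : Finset (Fin 2)} (hIJ : I ⊆ J)
    (hK : cs.simple '' K =
      (fun w => longest cs J * w * (longest cs J)⁻¹) '' (cs.simple '' I)) :
    K = if J = Finset.univ then I.image (opposition m) else I := by
  have hτ : cs.simple '' K = cs.simple ''
      ((fun i => if J = Finset.univ then opposition m i else i) '' I) := by
    rw [hK, Set.image_image, Set.image_image]
    exact Set.image_congr fun i hi => longest_conj_simple_of_mem cs (hIJ hi)
  have := (Set.image_injective.mpr (simple_injective cs)) hτ
  split_ifs at this ⊢
  · exact_mod_cast this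
  · simpa using this

end I2

open I2 (opposition)

theorem dihedralCactusRels_eq (m : ℕ) :
    dihedralCactusRels m =
      Set.range (fun j : Fin 3 => FreeGroup.of j * FreeGroup.of j) ∪
        Set.range (fun i : Fin 2 => FreeGroup.of 2 * FreeGroup.of i.castSucc * FreeGroup.of 2 *
          (FreeGroup.of (opposition m i).castSucc)⁻¹) := by
  ext r
  simp only [dihedralCactusRels, opposition, Set.mem_insert_iff, Set.mem_singleton_iff,
    Set.mem_union, Set.mem_range, Fin.exists_fin_succ, Fin.exists_fin_zero]
  by_cases hm : Even m <;> simp [hm, eq_comm, or_assoc]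

namespace DihedralCactus

variable {m : ℕ}

local notation "P" m => PresentedGroup (dihedralCactusRels m)

theorem of_mul_self (j : Fin 3) : (PresentedGroup.of j * PresentedGroup.of j : P m) = 1 := by
  have := PresentedGroup.one_of_mem (rels := dihedralCactusRels m)
    (by rw [dihedralCactusRels_eq]; exact Or.inl ⟨j, rfl⟩)
  rwa [map_mul] at this

theorem of_inv (j : Fin 3) : (PresentedGroup.of j : P m)⁻¹ = .of j :=
  inv_eq_of_mul_eq_one_right (of_mul_self j)

theorem of_castSucc_mul_of_two (i : Fin 2) :
    (PresentedGroup.of i.castSucc * PresentedGroup.of 2 : P m) =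
      PresentedGroup.of 2 * PresentedGroup.of (opposition m i).castSucc := by
  rw [← mul_mul_mul_inv_eq_one_iff (of_mul_self 2)]
  have := PresentedGroup.one_of_mem (rels := dihedralCactusRels m)
    (by rw [dihedralCactusRels_eq]; exact Or.inr ⟨i, rfl⟩)
  rwa [map_mul, map_mul, map_mul, map_inv] at this

def ofFinset (m : ℕ) (I : Finset (Fin 2)) : P m :=
  if I = ∅ then 1 else if I = Finset.univ then .of 2 else .of (if I = {0} then 0 else 1)

@[simp]
theorem ofFinset_empty : ofFinset m ∅ = 1 := rfl

@[simp]
theorem ofFinset_univ : ofFinset m Finset.univ = .of 2 := rfl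

@[simp]
theorem ofFinset_singleton (i : Fin 2) : ofFinset m {i} = .of i.castSucc := by
  fin_cases i <;> rfl

theorem ofFinset_mul_self (I : Finset (Fin 2)) : ofFinset m I * ofFinset m I = 1 := by
  obtain rfl | ⟨i, rfl⟩ | rfl := I.fin_two_cases <;> simp [of_mul_self]

def lift {G : Type*} [Group G] (a : Fin 2 → G) (c : G) (ha : ∀ i, a i * a i = 1)
    (hc : c * c = 1) (hac : ∀ i, a i * c = c * a (opposition m i)) : (P m) →* G :=
  PresentedGroup.toGroup (f := Fin.lastCases c a) <| by
    rw [dihedralCactusRels_eq]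
    have h2 : Fin.lastCases (motive := fun _ => G) c a 2 = c := Fin.lastCases_last
    rintro r (⟨j, rfl⟩ | ⟨i, rfl⟩)
    · cases j using Fin.lastCases with
      | last => simpa [h2] using hc
      | cast i => simpa using ha i
    · simpa [h2, mul_mul_mul_inv_eq_one_iff hc] using hac i

variable {G : Type*} [Group G] {a : Fin 2 → G} {c : G} {ha hc hac}

@[simp]
theorem lift_of_castSucc (i : Fin 2) :
    lift (m := m) a c ha hc hac (.of i.castSucc) = a i :=
  (PresentedGroup.toGroup.of _).trans (Fin.lastCases_castSucc _)

@[simp]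
theorem lift_of_two : lift (m := m) a c ha hc hac (.of 2) = c :=
  (PresentedGroup.toGroup.of _).trans Fin.lastCases_last

end DihedralCactus

namespace I2

open DihedralCactus

variable {m : ℕ} {hm : 3 ≤ m} (cs : CoxeterSystem (I2 m hm) W)

def cactusGen (I : Finset (Fin 2)) : CactusGroup (I2 m hm) cs :=
  PresentedGroup.of ⟨I, isSpherical cs I⟩

theorem cactusGen_mul_self (I : Finset (Fin 2)) : cactusGen cs I * cactusGen cs I = 1 := by
  have := PresentedGroup.one_of_mem (rels := cactusRels (I2 m hm) cs)
    (Or.inl ⟨⟨I, isSpherical cs I⟩, rfl⟩)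
  rwa [map_mul] at this

theorem cactusGen_empty : cactusGen cs ∅ = 1 := by
  let γ : Sph cs := ⟨∅, isSpherical cs ∅⟩
  have := PresentedGroup.one_of_mem (rels := cactusRels (I2 m hm) cs)
    (Or.inr (Or.inl ⟨γ, γ, γ, by simp [γ], by simp [γ], by simp [γ], rfl⟩))
  rwa [map_mul, map_mul, map_inv, mul_inv_cancel_right] at this

theorem cactusGen_singleton_mul_univ (i : Fin 2) :
    cactusGen cs {i} * cactusGen cs Finset.univ =
      cactusGen cs Finset.univ * cactusGen cs {opposition m i} := by
  rw [← mul_mul_inv_mul_inv_eq_one_iff]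
  have := PresentedGroup.one_of_mem (rels := cactusRels (I2 m hm) cs)
    (Or.inr (Or.inr ⟨⟨{i}, isSpherical cs _⟩, ⟨Finset.univ, isSpherical cs _⟩,
      ⟨{opposition m i}, isSpherical cs _⟩, Finset.subset_univ _,
      by simp [longest_univ_conj_simple], rfl⟩))
  rwa [map_mul, map_mul, map_mul, map_inv, map_inv] at this

theorem ofFinset_cactusRels :
    ∀ r ∈ cactusRels (I2 m hm) cs, FreeGroup.lift (fun I => ofFinset m I.1) r = 1 := by
  rintro r (⟨I, rfl⟩ | ⟨I, J, U, hIJ, hM, hU, rfl⟩ | ⟨I, J, K, hIJ, hK, rfl⟩) <;>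
    simp only [map_mul, map_inv, FreeGroup.lift_apply_of]
  · exact ofFinset_mul_self _
  · have : I.1 = ∅ ∨ J.1 = ∅ := by
      by_contra! h
      obtain ⟨⟨i, hi⟩, ⟨j, hj⟩⟩ := h
      have := hM i hi j hj
      rw [apply_of_ne (by rintro rfl; exact Finset.disjoint_left.mp hIJ hi hj)] at this
      omega
    rcases this with h | h <;> simp [hU, h]
  · rw [mul_mul_inv_mul_inv_eq_one_iff, eq_of_image_simple_eq_conj cs hIJ hK]
    split_ifs with hJ
    · rw [hJ, ofFinset_univ]
      obtain h | ⟨i, h⟩ | h := I.1.fin_two_cases <;> rw [h]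
      · simp
      · simp [of_castSucc_mul_of_two]
      · rw [Finset.image_univ_of_surjective opposition_involutive.surjective, ofFinset_univ]
    · rcases Finset.eq_empty_or_eq_of_subset_of_ne_univ hIJ hJ with h | h <;> simp [h]

noncomputable def toDihedralCactus :
    CactusGroup (I2 m hm) cs →* PresentedGroup (dihedralCactusRels m) :=
  PresentedGroup.toGroup (ofFinset_cactusRels cs)

@[simp]
theorem toDihedralCactus_cactusGen (I : Finset (Fin 2)) :
    toDihedralCactus cs (cactusGen cs I) = ofFinset m I :=
  PresentedGroup.toGroup.of _

noncomputable def ofDihedralCactus :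
    PresentedGroup (dihedralCactusRels m) →* CactusGroup (I2 m hm) cs :=
  DihedralCactus.lift (fun i => cactusGen cs {i}) (cactusGen cs Finset.univ)
    (fun _ => cactusGen_mul_self cs _) (cactusGen_mul_self cs _)
    (cactusGen_singleton_mul_univ cs)

theorem ofDihedralCactus_ofFinset (I : Finset (Fin 2)) :
    ofDihedralCactus cs (ofFinset m I) = cactusGen cs I := by
  obtain rfl | ⟨i, rfl⟩ | rfl := I.fin_two_cases
  · rw [ofFinset_empty, map_one, cactusGen_empty]
  · rw [ofFinset_singleton, ofDihedralCactus, lift_of_castSucc]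
  · rw [ofFinset_univ, ofDihedralCactus, lift_of_two]

noncomputable def cactusEquiv :
    CactusGroup (I2 m hm) cs ≃* PresentedGroup (dihedralCactusRels m) :=
  MonoidHom.toMulEquiv (toDihedralCactus cs) (ofDihedralCactus cs)
    (PresentedGroup.ext fun I =>
      (congrArg _ (toDihedralCactus_cactusGen cs I.1)).trans (ofDihedralCactus_ofFinset cs I.1))
    (PresentedGroup.ext fun j => by
      cases j using Fin.lastCases with
      | last => exact congrArg (toDihedralCactus cs) (ofDihedralCactus_ofFinset cs Finset.univ)
      | cast i =>
        rw [MonoidHom.comp_apply, ← ofFinset_singleton, ofDihedralCactus_ofFinset,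
          toDihedralCactus_cactusGen]
        rfl)

end I2

namespace DihedralCactus

variable (m : ℕ)

local notation "P" m => PresentedGroup (dihedralCactusRels m)

local notation "u" => (Multiplicative.ofAdd 1 : C2)

theorem coprodComm_mul_self :
    (MulEquiv.coprodComm C2 C2 * MulEquiv.coprodComm C2 C2 : MulAut (Coprod C2 C2)) = 1 :=
  MulEquiv.ext Coprod.swap_swap

def oppositionAction : C2 →* MulAut (Coprod C2 C2) :=
  if Even m then 1 else C2.lift (MulEquiv.coprodComm C2 C2) coprodComm_mul_self

def freeGen : Fin 2 → Coprod C2 C2 := ![Coprod.inl u, Coprod.inr u]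

theorem freeGen_mul_self (i : Fin 2) : freeGen i * freeGen i = 1 := by
  fin_cases i <;> simp [freeGen, ← map_mul, C2.ofAdd_one_mul_self]

theorem oppositionAction_freeGen (i : Fin 2) :
    oppositionAction m u (freeGen i) = freeGen (opposition m i) := by
  by_cases h : Even m <;> fin_cases i <;> simp [oppositionAction, opposition, freeGen, h]

def ofCoprod : Coprod C2 C2 →* P m :=
  Coprod.lift (C2.lift (.of 0) (of_mul_self 0)) (C2.lift (.of 1) (of_mul_self 1))

theorem ofCoprod_freeGen (i : Fin 2) : ofCoprod m (freeGen i) = .of i.castSucc := by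
  fin_cases i <;> simp [ofCoprod, freeGen]

theorem inr_mul_self :
    (SemidirectProduct.inr u * .inr u : Coprod C2 C2 ⋊[oppositionAction m] C2) = 1 := by
  rw [← map_mul, C2.ofAdd_one_mul_self, map_one]

def toSemidirectProduct : (P m) →* Coprod C2 C2 ⋊[oppositionAction m] C2 :=
  lift (fun i => .inl (freeGen i)) (.inr u)
    (fun i => by rw [← map_mul, freeGen_mul_self, map_one]) (inr_mul_self m) fun i => by
      rw [← oppositionAction_freeGen, SemidirectProduct.inl_aut, show u⁻¹ = u from rfl,
        ← mul_assoc, ← mul_assoc, inr_mul_self, one_mul]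

theorem ofCoprod_oppositionAction_freeGen (i : Fin 2) :
    ofCoprod m (oppositionAction m u (freeGen i)) =
      .of 2 * ofCoprod m (freeGen i) * (.of 2)⁻¹ := by
  rw [oppositionAction_freeGen, ofCoprod_freeGen, ofCoprod_freeGen, of_inv, mul_assoc,
    of_castSucc_mul_of_two, ← mul_assoc, of_mul_self, one_mul]

def ofSemidirectProduct : Coprod C2 C2 ⋊[oppositionAction m] C2 →* P m :=
  SemidirectProduct.lift (ofCoprod m) (C2.lift (.of 2) (of_mul_self 2)) fun g => by
    obtain rfl | rfl := C2.eq_one_or_eq_ofAdd_one g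
    · ext <;> simp
    · exact Coprod.hom_ext (C2.hom_ext (ofCoprod_oppositionAction_freeGen m 0))
        (C2.hom_ext (ofCoprod_oppositionAction_freeGen m 1))

theorem ofSemidirectProduct_inr : ofSemidirectProduct m (.inr u) = .of 2 := by
  simp [ofSemidirectProduct]

theorem toSemidirectProduct_ofSemidirectProduct_inl_freeGen (i : Fin 2) :
    toSemidirectProduct m (ofSemidirectProduct m (.inl (freeGen i))) = .inl (freeGen i) := by
  simp [ofSemidirectProduct, ofCoprod_freeGen, toSemidirectProduct]

noncomputable def semidirectProductEquiv : (P m) ≃* Coprod C2 C2 ⋊[oppositionAction m] C2 :=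
  MonoidHom.toMulEquiv (toSemidirectProduct m) (ofSemidirectProduct m)
    (PresentedGroup.ext fun j => by
      cases j using Fin.lastCases with
      | last =>
        exact (congrArg (ofSemidirectProduct m) lift_of_two).trans (ofSemidirectProduct_inr m)
      | cast i => simp [toSemidirectProduct, ofSemidirectProduct, ofCoprod_freeGen])
    (SemidirectProduct.hom_ext
      (Coprod.hom_ext (C2.hom_ext (toSemidirectProduct_ofSemidirectProduct_inl_freeGen m 0))
        (C2.hom_ext (toSemidirectProduct_ofSemidirectProduct_inl_freeGen m 1)))
      (C2.hom_ext ((congrArg (toSemidirectProduct m) (ofSemidirectProduct_inr m)).trans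
        lift_of_two)))

end DihedralCactus

theorem stmt_18 (m : ℕ) (hm : 3 ≤ m) (cs : CoxeterSystem (I2 m hm) (I2 m hm).Group) :
    Nonempty (CactusGroup (I2 m hm) cs ≃* PresentedGroup (dihedralCactusRels m)) ∧
      (Even m → Nonempty (CactusGroup (I2 m hm) cs ≃* (Coprod C2 C2) × C2)) ∧
      (¬ Even m → ∃ φ : C2 →* MulAut (Coprod C2 C2),
        φ (Multiplicative.ofAdd 1) = MulEquiv.coprodComm C2 C2 ∧
        Nonempty (CactusGroup (I2 m hm) cs ≃* (Coprod C2 C2) ⋊[φ] C2)) := by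
  have e := (I2.cactusEquiv cs).trans (DihedralCactus.semidirectProductEquiv m)
  refine ⟨⟨I2.cactusEquiv cs⟩, fun he => ?_,
    fun he => ⟨DihedralCactus.oppositionAction m, ?_, ⟨e⟩⟩⟩
  · rw [DihedralCactus.oppositionAction, if_pos he] at e
    exact ⟨e.trans SemidirectProduct.mulEquivProd⟩
  · simp [DihedralCactus.oppositionAction, he]
end
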